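/- Let h(x) = log(x) - ψ(x) for x > 0, where ψ is the digamma function. Then h is continuous, strictly decreasing, and for every c ∈ (0, ∞) the equation h(k) = c has a unique solution k ∈ (0, ∞). -/

import Mathlib

/-!
Write `h x = log x - ψ x`. The chord of the convex function `log ∘ Γ` over `[x, x + 1]` has slope
`log x`, so `ψ x ≤ log x ≤ ψ (x + 1) = ψ x + 1 / x`, i.e. `0 ≤ h x ≤ 1 / x`; hence `h → 0` at `∞`,
and `h x ≥ 1 / x + log x - log (x + 1) → ∞` as `x → 0⁺`. The unit difference
`h x - h (x + 1) = 1 / x - log (1 + 1 / x)` is strictly decreasing, and a function with a limit at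
`∞` whose unit difference is strictly decreasing is itself strictly decreasing: for `x < y` the
sequence `h (y + n) - h (x + n)` increases strictly to `0`. Continuity comes from the analyticity of
`Γ` off the poles, and the intermediate value theorem gives surjectivity onto `(0, ∞)`.
-/

open MeasureTheory Real Filter Set Topology

noncomputable def gammaPdf (k l x : ℝ) : ℝ :=
  l ^ (-k) * x ^ (k - 1) * Real.exp (-x / l) / Real.Gamma k

noncomputable def digamma (x : ℝ) : ℝ := deriv Real.Gamma x / Real.Gamma x

theorem Complex.analyticAt_Gamma {s : ℂ} (hs : ∀ m : ℕ, s ≠ -m) : AnalyticAt ℂ Gamma s := by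
  have h := (differentiable_one_div_Gamma.analyticAt s).inv (inv_ne_zero (Gamma_ne_zero hs))
  rwa [show (fun z => (Gamma z)⁻¹)⁻¹ = Gamma by funext z; simp] at h

theorem Real.analyticAt_Gamma {x : ℝ} (hx : ∀ m : ℕ, x ≠ -m) : AnalyticAt ℝ Gamma x := by
  have h := (Complex.analyticAt_Gamma (s := x) fun m => mod_cast hx m).re_ofReal
  simpa [Complex.Gamma_ofReal] using h

theorem continuousAt_digamma {x : ℝ} (hx : ∀ m : ℕ, x ≠ -m) : ContinuousAt digamma x :=
  (Real.analyticAt_Gamma hx).deriv.continuousAt.div (Real.analyticAt_Gamma hx).continuousAt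
    (Real.Gamma_ne_zero hx)

theorem digamma_add_one {x : ℝ} (hx : ∀ m : ℕ, x ≠ -m) : digamma (x + 1) = digamma x + x⁻¹ := by
  have hx0 : x ≠ 0 := by simpa using hx 0
  have hx1 : ∀ m : ℕ, x + 1 ≠ -m := fun m h => hx (m + 1) (by push_cast; linarith)
  have hshift : HasDerivAt (fun t => Gamma (t + 1)) (deriv Gamma (x + 1)) x :=
    (Real.differentiableAt_Gamma hx1).hasDerivAt.comp_add_const x 1
  have hprod : HasDerivAt (fun t => t * Gamma t) (1 * Gamma x + x * deriv Gamma x) x :=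
    (hasDerivAt_id x).mul (Real.differentiableAt_Gamma hx).hasDerivAt
  have hfeq : (fun t => Gamma (t + 1)) =ᶠ[𝓝 x] fun t => t * Gamma t := by
    filter_upwards [isOpen_ne.mem_nhds hx0] with t ht using Real.Gamma_add_one ht
  have hderiv := hshift.unique (hprod.congr_of_eventuallyEq hfeq)
  have hΓ := Real.Gamma_ne_zero hx
  rw [digamma, digamma, hderiv, Real.Gamma_add_one hx0]
  field_simp
  ring

theorem ne_neg_natCast_of_pos {x : ℝ} (hx : 0 < x) (m : ℕ) : x ≠ -m := by
  linarith [m.cast_nonneg (α := ℝ)]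

theorem hasDerivAt_log_Gamma {x : ℝ} (hx : 0 < x) :
    HasDerivAt (log ∘ Gamma) (digamma x) x :=
  (Real.differentiableAt_Gamma (ne_neg_natCast_of_pos hx)).hasDerivAt.log
    (Real.Gamma_pos_of_pos hx).ne'

theorem slope_log_Gamma_add_one {x : ℝ} (hx : 0 < x) :
    slope (log ∘ Gamma) x (x + 1) = log x := by
  rw [slope_def_field, Function.comp_apply, Function.comp_apply, Real.Gamma_add_one hx.ne',
    log_mul hx.ne' (Real.Gamma_pos_of_pos hx).ne']
  ring

theorem digamma_le_log {x : ℝ} (hx : 0 < x) : digamma x ≤ log x := by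
  rw [← slope_log_Gamma_add_one hx, ← (hasDerivAt_log_Gamma hx).deriv]
  exact Real.convexOn_log_Gamma.deriv_le_slope hx (add_pos hx one_pos) (lt_add_one x)
    (hasDerivAt_log_Gamma hx).differentiableAt

theorem log_sub_digamma_nonneg {x : ℝ} (hx : 0 < x) : 0 ≤ log x - digamma x :=
  sub_nonneg.mpr (digamma_le_log hx)

theorem log_sub_digamma_le_inv {x : ℝ} (hx : 0 < x) : log x - digamma x ≤ x⁻¹ := by
  have hx1 : 0 < x + 1 := by linarith
  have h := Real.convexOn_log_Gamma.slope_le_deriv hx hx1 (lt_add_one x)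
    (hasDerivAt_log_Gamma hx1).differentiableAt
  rw [slope_log_Gamma_add_one hx, (hasDerivAt_log_Gamma hx1).deriv,
    digamma_add_one (ne_neg_natCast_of_pos hx)] at h
  linarith

theorem tendsto_log_sub_digamma_atTop :
    Tendsto (fun x => log x - digamma x) atTop (𝓝 0) :=
  tendsto_of_tendsto_of_tendsto_of_le_of_le' tendsto_const_nhds tendsto_inv_atTop_zero
    (eventually_gt_atTop 0 |>.mono fun _ => log_sub_digamma_nonneg)
    (eventually_gt_atTop 0 |>.mono fun _ => log_sub_digamma_le_inv)

theorem tendsto_log_sub_digamma_nhdsGT_zero :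
    Tendsto (fun x => log x - digamma x) (𝓝[>] 0) atTop := by
  have hlower : ∀ x ∈ Ioi (0 : ℝ), (1 + log x * x) * x⁻¹ - log (x + 1) ≤ log x - digamma x := by
    intro x (hx : 0 < x)
    have h := digamma_le_log (add_pos hx one_pos)
    rw [digamma_add_one (ne_neg_natCast_of_pos hx)] at h
    have : (1 + log x * x) * x⁻¹ = x⁻¹ + log x := by field_simp
    linarith
  have hmul : Tendsto (fun x => 1 + log x * x) (𝓝[>] 0) (𝓝 1) := by
    simpa using (tendsto_log_mul_rpow_nhdsGT_zero zero_lt_one).const_add 1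
  have hlog : Tendsto (fun x => log (x + 1)) (𝓝[>] 0) (𝓝 0) := by
    have := ((continuous_add_const (1 : ℝ)).tendsto 0).log (by norm_num)
    simpa using this.mono_left nhdsWithin_le_nhds
  refine tendsto_atTop_mono' _ (eventually_nhdsWithin_of_forall hlower) ?_
  exact (hmul.pos_mul_atTop one_pos tendsto_inv_nhdsGT_zero).atTop_add hlog.neg

theorem strictAntiOn_Ioi_of_tendsto_of_strictAntiOn_sub_add_one {f : ℝ → ℝ} {a L : ℝ}
    (hf : Tendsto f atTop (𝓝 L)) (hΔ : StrictAntiOn (fun x => f x - f (x + 1)) (Ioi a)) :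
    StrictAntiOn f (Ioi a) := by
  intro x (hx : a < x) y (hy : a < y) hxy
  set g : ℕ → ℝ := fun n => f (y + n) - f (x + n) with hg_def
  have hg : StrictMono g := strictMono_nat_of_lt_succ fun n => by
    have hxn : a < x + n := by linarith [n.cast_nonneg (α := ℝ)]
    have hyn : a < y + n := by linarith [n.cast_nonneg (α := ℝ)]
    have := hΔ hxn hyn (by linarith)
    simp only [hg_def, Nat.cast_succ, ← add_assoc]
    linarith
  have hshift (z : ℝ) : Tendsto (fun n : ℕ => f (z + n)) atTop (𝓝 L) :=
    hf.comp (tendsto_atTop_add_const_left _ z tendsto_natCast_atTop_atTop)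
  have hg_lim : Tendsto g atTop (𝓝 0) := by simpa using (hshift y).sub (hshift x)
  have : g 0 < 0 := (hg zero_lt_one).trans_le (hg.monotone.ge_of_tendsto hg_lim 1)
  simpa [hg_def] using this

theorem strictMonoOn_sub_log_one_add : StrictMonoOn (fun u => u - log (1 + u)) (Ici 0) := by
  intro u (hu : 0 ≤ u) v _ huv
  have hu1 : 0 < 1 + u := by linarith
  have hratio : log ((1 + v) / (1 + u)) < (1 + v) / (1 + u) - 1 :=
    log_lt_sub_one_of_pos (div_pos (by linarith) hu1)
      (by rw [Ne, div_eq_one_iff_eq hu1.ne']; linarith)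
  have hle : (1 + v) / (1 + u) - 1 ≤ v - u := by
    rw [div_sub_one hu1.ne', div_le_iff₀ hu1]
    nlinarith
  rw [log_div (by linarith) hu1.ne'] at hratio
  show u - log (1 + u) < v - log (1 + v)
  linarith

theorem log_sub_digamma_sub_add_one {x : ℝ} (hx : 0 < x) :
    (log x - digamma x) - (log (x + 1) - digamma (x + 1)) = x⁻¹ - log (1 + x⁻¹) := by
  rw [digamma_add_one (ne_neg_natCast_of_pos hx),
    show 1 + x⁻¹ = (x + 1) / x by field_simp, log_div (by linarith) hx.ne']
  ring

theorem strictAntiOn_log_sub_digamma : StrictAntiOn (fun x => log x - digamma x) (Ioi 0) := by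
  refine strictAntiOn_Ioi_of_tendsto_of_strictAntiOn_sub_add_one tendsto_log_sub_digamma_atTop ?_
  refine (strictMonoOn_sub_log_one_add.comp_strictAntiOn strictAntiOn_inv_pos
    fun x hx => mem_Ici.mpr (inv_pos.mpr hx).le).congr fun x hx => ?_
  exact (log_sub_digamma_sub_add_one hx).symm

theorem log_sub_digamma_bijective :
    ContinuousOn (fun x => Real.log x - digamma x) (Set.Ioi 0) ∧
    StrictAntiOn (fun x => Real.log x - digamma x) (Set.Ioi 0) ∧
    ∀ c > (0 : ℝ), ∃! x : ℝ, x ∈ Set.Ioi (0 : ℝ) ∧ Real.log x - digamma x = c := by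
  have hcont : ContinuousOn (fun x => Real.log x - digamma x) (Set.Ioi 0) := fun x hx =>
    ((continuousAt_log hx.ne').sub
      (continuousAt_digamma (ne_neg_natCast_of_pos hx))).continuousWithinAt
  have hsurj : Ioi 0 ⊆ (fun x => Real.log x - digamma x) '' Ioi 0 :=
    isPreconnected_Ioi.intermediate_value_Ioi (l₁ := atTop) (l₂ := 𝓝[>] 0)
      (le_principal_iff.mpr (Ioi_mem_atTop 0)) (le_principal_iff.mpr self_mem_nhdsWithin) hcont
      tendsto_log_sub_digamma_atTop tendsto_log_sub_digamma_nhdsGT_zero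
  refine ⟨hcont, strictAntiOn_log_sub_digamma, fun c hc => ?_⟩
  obtain ⟨x, hx, hxc⟩ := hsurj hc
  exact ⟨x, ⟨hx, hxc⟩, fun y ⟨hy, hyc⟩ =>
    strictAntiOn_log_sub_digamma.injOn hy hx (hyc.trans hxc.symm)⟩
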